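/- arXiv:1602.00528 — 2 statements merged into one kernel-verified Lean document; each statement's English description precedes it below -/
import Mathlib

section
/- Let (x(s), z(s)) define a unit-speed generating curve of a surface of revolution around the z-axis, with x(s) > 0, and set U = (x(x'z''−x''z') − z')/(2x) and Z(s) = (x'(s) + i z'(s))/x(s). Then Z satisfies the first-order complex ODE Z' − 2iU·Z + |Z|² = 0. -/
noncomputable section

private lemma expand_aux (X N x' z' : ℂ) (hX : X ≠ 0) :
    2 * Complex.I * (N / (2 * X)) * ((x' + z' * Complex.I) / X) - 1 / X ^ 2
      = (Complex.I * (N * (x' + z' * Complex.I)) - 1) / X ^ 2 := by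
  field_simp

/-- with `U = (x(x'z''−x''z') − z')/(2x)` and `Z = (x' + i z')/x` along a
unit-speed generating curve (`x'² + z'² = 1`, `x > 0`), the complex function `Z` satisfies the
first-order ODE `Z' − 2iU·Z + |Z|² = 0`, i.e. `Z' = 2iU·Z − |Z|²`. -/
theorem revolution_surface_complex_riccati
    (x z x' z' x'' z'' : ℝ → ℝ)
    (hx : ∀ s, HasDerivAt x (x' s) s) (hz : ∀ s, HasDerivAt z (z' s) s)
    (hx' : ∀ s, HasDerivAt x' (x'' s) s) (hz' : ∀ s, HasDerivAt z' (z'' s) s)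
    (hunit : ∀ s, (x' s) ^ 2 + (z' s) ^ 2 = 1)
    (horth : ∀ s, x' s * x'' s + z' s * z'' s = 0)
    (hxpos : ∀ s, 0 < x s)
    (U : ℝ → ℝ)
    (hU : ∀ s, U s = (x s * (x' s * z'' s - x'' s * z' s) - z' s) / (2 * x s))
    (Z : ℝ → ℂ)
    (hZ : ∀ s, Z s = ((x' s : ℂ) + (z' s : ℂ) * Complex.I) / (x s : ℂ)) (s : ℝ) :
    HasDerivAt Z (2 * Complex.I * (U s : ℂ) * Z s - ((‖Z s‖ : ℝ) : ℂ) ^ 2) s := by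
  have hxne : (x s : ℂ) ≠ 0 := by
    exact_mod_cast (hxpos s).ne'
  have hxner : x s ≠ 0 := (hxpos s).ne'
  have hf : HasDerivAt (fun t => ((x' t : ℂ) + (z' t : ℂ) * Complex.I))
      ((x'' s : ℂ) + (z'' s : ℂ) * Complex.I) s :=
    ((hx' s).ofReal_comp).add (((hz' s).ofReal_comp).mul_const Complex.I)
  have hg : HasDerivAt (fun t => ((x t : ℂ))) (x' s : ℂ) s := (hx s).ofReal_comp
  have hdiv := hf.div hg hxne
  have hD : HasDerivAt Z
      ((((x'' s : ℂ) + (z'' s : ℂ) * Complex.I) * (x s : ℂ)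
        - ((x' s : ℂ) + (z' s : ℂ) * Complex.I) * (x' s : ℂ)) / (x s : ℂ) ^ 2) s :=
    hdiv.congr_of_eventuallyEq (Filter.Eventually.of_forall fun t => hZ t)
  convert hD using 1
  have h1 : ((x' s : ℂ)) ^ 2 + ((z' s : ℂ)) ^ 2 = 1 := by exact_mod_cast hunit s
  have h2 : ((x' s : ℂ)) * (x'' s : ℂ) + ((z' s : ℂ)) * (z'' s : ℂ) = 0 := by
    exact_mod_cast horth s
  have hr : (‖Z s‖) ^ 2 = 1 / (x s) ^ 2 := by
    rw [Complex.sq_norm, hZ s, map_div₀, Complex.normSq_add_mul_I, Complex.normSq_ofReal,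
      hunit s]
    field_simp
  have habs : ((‖Z s‖ : ℝ) : ℂ) ^ 2 = 1 / (x s : ℂ) ^ 2 := by
    exact_mod_cast hr
  have hzz : (z' s : ℂ) * ((x' s : ℂ) * (z'' s : ℂ) - (x'' s : ℂ) * (z' s : ℂ))
      + (x'' s : ℂ) = 0 := by
    linear_combination (x' s : ℂ) * h2 - (x'' s : ℂ) * h1
  have hxx : (x' s : ℂ) * ((x' s : ℂ) * (z'' s : ℂ) - (x'' s : ℂ) * (z' s : ℂ))
      - (z'' s : ℂ) = 0 := by
    linear_combination (z'' s : ℂ) * h1 - (z' s : ℂ) * h2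
  have key : Complex.I * (((x s : ℂ) * ((x' s : ℂ) * (z'' s : ℂ) - (x'' s : ℂ) * (z' s : ℂ))
        - (z' s : ℂ)) * ((x' s : ℂ) + (z' s : ℂ) * Complex.I)) - 1
      = ((x'' s : ℂ) + (z'' s : ℂ) * Complex.I) * (x s : ℂ)
        - ((x' s : ℂ) + (z' s : ℂ) * Complex.I) * (x' s : ℂ) := by
    linear_combination Complex.I * (x s : ℂ) * hxx - (x s : ℂ) * hzz + h1
      + ((x s : ℂ) * (x' s : ℂ) * (z'' s : ℂ) * (z' s : ℂ)
        - (x s : ℂ) * (x'' s : ℂ) * (z' s : ℂ) ^ 2 - (z' s : ℂ) ^ 2) * Complex.I_sq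
  have expand := expand_aux (x s : ℂ)
    ((x s : ℂ) * ((x' s : ℂ) * (z'' s : ℂ) - (x'' s : ℂ) * (z' s : ℂ)) - (z' s : ℂ))
    (x' s : ℂ) (z' s : ℂ) hxne
  rw [habs, hZ s, hU s]
  push_cast
  rw [expand, key]
end
end

section
/- Let U(ρ) be continuous and define A(ρ) = ±(2∫ U(ρ) dρ/ρ + a₁). On any interval where 1 − ρ²A(ρ)² > 0, the curve λ(ρ) = ±∫ ρA(ρ)/√(1 − ρ²A(ρ)²) dρ + a₂ satisfies λ'(ρ)² (1 − ρ²A²) = ρ²A², i.e. λ'² = A²ρ²(1 + λ'²), and the surface of revolution x(ρ,φ) = (ρ cos φ, ρ sin φ, λ(ρ)) has √(H² − K) = |U(ρ)|. -/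
noncomputable section

def dot3 (u v : ℝ × ℝ × ℝ) : ℝ := u.1 * v.1 + u.2.1 * v.2.1 + u.2.2 * v.2.2

def cross3 (u v : ℝ × ℝ × ℝ) : ℝ × ℝ × ℝ :=
  (u.2.1 * v.2.2 - u.2.2 * v.2.1,
   u.2.2 * v.1 - u.1 * v.2.2,
   u.1 * v.2.1 - u.2.1 * v.1)

def norm3 (u : ℝ × ℝ × ℝ) : ℝ := Real.sqrt (dot3 u u)

def smul3 (c : ℝ) (u : ℝ × ℝ × ℝ) : ℝ × ℝ × ℝ := (c * u.1, c * u.2.1, c * u.2.2)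

/-- auxiliary algebraic identity: if `l = δ t b / √(1 - t²b²)` with `δ² = 1` then
`t b = δ l / √(1 + l²)`. -/
lemma aux_eq (δ t b l : ℝ) (hδ2 : δ ^ 2 = 1) (hw : 0 < 1 - t ^ 2 * b ^ 2)
    (hl : l = δ * (t * b / Real.sqrt (1 - t ^ 2 * b ^ 2))) :
    t * b = δ * (l / Real.sqrt (1 + l ^ 2)) := by
  set s := Real.sqrt (1 - t ^ 2 * b ^ 2) with hsd
  have hs0 : 0 < s := Real.sqrt_pos.mpr hw
  have hs2 : s ^ 2 = 1 - t ^ 2 * b ^ 2 := Real.sq_sqrt hw.le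
  have hl2 : 1 + l ^ 2 = (1 / s) ^ 2 := by
    rw [hl]
    field_simp
    linear_combination hs2 + (t ^ 2 * b ^ 2) * hδ2
  have hsq : Real.sqrt (1 + l ^ 2) = 1 / s := by
    rw [hl2]; exact Real.sqrt_sq (by positivity)
  rw [hsq, hl]
  field_simp
  linear_combination (-(t * b)) * hδ2

/-- given `U` continuous, `A(ρ) = ±(2∫U dρ/ρ + a₁)` (encoded by
`A' = ±2U/ρ`), on an interval where `1 − ρ²A² > 0` the curve
`λ(ρ) = ±∫ ρA/√(1−ρ²A²) dρ + a₂` (encoded by `λ' = ±ρA/√(1−ρ²A²)`) satisfies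
`λ'²(1−ρ²A²) = ρ²A²`, i.e. `λ'² = A²ρ²(1+λ'²)`, and the associated surface of revolution
`x(ρ,φ) = (ρ cos φ, ρ sin φ, λ(ρ))` has `√(H²−K) = |U(ρ)|`. -/
theorem prescribed_gip_revolution_graph
    (U A lam lam' lam'' : ℝ → ℝ) (ε δ : ℝ)
    (hε : ε = 1 ∨ ε = -1) (hδ : δ = 1 ∨ δ = -1)
    (hU : Continuous U)
    (S : Set ℝ) (hS : IsOpen S) (hSpos : ∀ ρ ∈ S, 0 < ρ)
    (hA : ∀ ρ ∈ S, HasDerivAt A (ε * (2 * U ρ / ρ)) ρ)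
    (hpos : ∀ ρ ∈ S, 0 < 1 - ρ ^ 2 * (A ρ) ^ 2)
    (hlam' : ∀ ρ ∈ S, lam' ρ = δ * (ρ * A ρ / Real.sqrt (1 - ρ ^ 2 * (A ρ) ^ 2)))
    (hlam : ∀ ρ ∈ S, HasDerivAt lam (lam' ρ) ρ)
    (hlam'' : ∀ ρ ∈ S, HasDerivAt lam' (lam'' ρ) ρ)
    (ρ φ : ℝ) (hρ : ρ ∈ S) :
    -- fundamental forms of x(ρ,φ) = (ρ cos φ, ρ sin φ, λ(ρ))
    let Xρ : ℝ × ℝ × ℝ := (Real.cos φ, Real.sin φ, lam' ρ)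
    let Xφ : ℝ × ℝ × ℝ := (-ρ * Real.sin φ, ρ * Real.cos φ, 0)
    let Xρρ : ℝ × ℝ × ℝ := (0, 0, lam'' ρ)
    let Xρφ : ℝ × ℝ × ℝ := (-Real.sin φ, Real.cos φ, 0)
    let Xφφ : ℝ × ℝ × ℝ := (-ρ * Real.cos φ, -ρ * Real.sin φ, 0)
    let N : ℝ × ℝ × ℝ := smul3 (norm3 (cross3 Xρ Xφ))⁻¹ (cross3 Xρ Xφ)
    let g11 := dot3 Xρ Xρ
    let g12 := dot3 Xρ Xφ
    let g22 := dot3 Xφ Xφ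
    let h11 := dot3 Xρρ N
    let h12 := dot3 Xρφ N
    let h22 := dot3 Xφφ N
    let K := (h11 * h22 - h12 ^ 2) / (g11 * g22 - g12 ^ 2)
    let H := (h11 * g22 - 2 * h12 * g12 + h22 * g11) / (2 * (g11 * g22 - g12 ^ 2))
    (lam' ρ) ^ 2 * (1 - ρ ^ 2 * (A ρ) ^ 2) = ρ ^ 2 * (A ρ) ^ 2 ∧
      (lam' ρ) ^ 2 = (A ρ) ^ 2 * ρ ^ 2 * (1 + (lam' ρ) ^ 2) ∧
      Real.sqrt (H ^ 2 - K) = |U ρ| := by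
  have hρ0 : 0 < ρ := hSpos ρ hρ
  have hε2 : ε ^ 2 = 1 := by rcases hε with h | h <;> simp [h]
  have hδ2 : δ ^ 2 = 1 := by rcases hδ with h | h <;> simp [h]
  have hw : 0 < 1 - ρ ^ 2 * (A ρ) ^ 2 := hpos ρ hρ
  have hs0 : 0 < Real.sqrt (1 - ρ ^ 2 * (A ρ) ^ 2) := Real.sqrt_pos.mpr hw
  have hs2 : Real.sqrt (1 - ρ ^ 2 * (A ρ) ^ 2) ^ 2 = 1 - ρ ^ 2 * (A ρ) ^ 2 :=
    Real.sq_sqrt hw.le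
  have hL0 : lam' ρ = δ * (ρ * A ρ / Real.sqrt (1 - ρ ^ 2 * (A ρ) ^ 2)) := hlam' ρ hρ
  -- part 1
  have part1 : (lam' ρ) ^ 2 * (1 - ρ ^ 2 * (A ρ) ^ 2) = ρ ^ 2 * (A ρ) ^ 2 := by
    rw [hL0]
    field_simp
    linear_combination (A ρ ^ 2 - A ρ ^ 4 * ρ ^ 2) * hδ2 - (A ρ ^ 2) * hs2
  have part2 : (lam' ρ) ^ 2 = (A ρ) ^ 2 * ρ ^ 2 * (1 + (lam' ρ) ^ 2) := by
    linear_combination part1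
  -- q = √(1+λ'²)
  set q := Real.sqrt (1 + (lam' ρ) ^ 2) with hqd
  have hq0 : 0 < q := Real.sqrt_pos.mpr (by positivity)
  have hq2 : q ^ 2 = 1 + (lam' ρ) ^ 2 := Real.sq_sqrt (by positivity)
  have hLq : lam' ρ = δ * ρ * A ρ * q := by
    have h := aux_eq δ ρ (A ρ) (lam' ρ) hδ2 hw hL0
    have hq' : Real.sqrt (1 + (lam' ρ) ^ 2) ≠ 0 := hq0.ne'
    field_simp at h
    rw [← hqd] at h
    linear_combination (-δ) * h - lam' ρ * hδ2
  -- derivative uniqueness : compute λ''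
  have hder : HasDerivAt (fun t => t * A t) (A ρ + 2 * ε * U ρ) ρ := by
    have h := (hasDerivAt_id ρ).mul (hA ρ hρ)
    refine h.congr_deriv ?_
    simp only [id]
    field_simp
  have hinner : HasDerivAt (fun t => 1 + (lam' t) ^ 2) (2 * lam' ρ * lam'' ρ) ρ := by
    have h := ((hlam'' ρ hρ).pow 2).const_add 1
    refine h.congr_deriv ?_
    push_cast
    ring
  have hsq' : HasDerivAt (fun t => Real.sqrt (1 + (lam' t) ^ 2))
      ((2 * lam' ρ * lam'' ρ) / (2 * q)) ρ := hinner.sqrt (by positivity)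
  have hG : HasDerivAt (fun t => δ * (lam' t / Real.sqrt (1 + (lam' t) ^ 2)))
      (δ * (lam'' ρ / q ^ 3)) ρ := by
    have h := ((hlam'' ρ hρ).div hsq' hq0.ne').const_mul δ
    refine h.congr_deriv ?_
    rw [← hqd]
    field_simp
    linear_combination (δ * lam'' ρ) * hq2
  have hGρ : HasDerivAt (fun t => t * A t) (δ * (lam'' ρ / q ^ 3)) ρ := by
    apply hG.congr_of_eventuallyEq
    filter_upwards [hS.mem_nhds hρ] with t ht
    exact aux_eq δ t (A t) (lam' t) hδ2 (hpos t ht) (hlam' t ht)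
  have hkey : A ρ + 2 * ε * U ρ = δ * (lam'' ρ / q ^ 3) := hder.unique hGρ
  have hL2q : lam'' ρ = δ * (A ρ + 2 * ε * U ρ) * q ^ 3 := by
    field_simp at hkey
    linear_combination (-δ) * hkey - lam'' ρ * hδ2
  -- geometry
  intro Xρ Xφ Xρρ Xρφ Xφφ N g11 g12 g22 h11 h12 h22 K Hm
  refine ⟨part1, part2, ?_⟩
  have trig : Real.cos φ ^ 2 + Real.sin φ ^ 2 = 1 := by
    rw [add_comm]; exact Real.sin_sq_add_cos_sq φ
  have hcross : cross3 Xρ Xφ =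
      (-(ρ * lam' ρ * Real.cos φ), -(ρ * lam' ρ * Real.sin φ), ρ) := by
    simp only [Xρ, Xφ, cross3, Prod.mk.injEq]
    refine ⟨by ring, by ring, by linear_combination ρ * trig⟩
  have hnorm : norm3 (cross3 Xρ Xφ) = ρ * q := by
    rw [hcross]
    simp only [norm3, dot3]
    rw [show -(ρ * lam' ρ * Real.cos φ) * -(ρ * lam' ρ * Real.cos φ) +
        -(ρ * lam' ρ * Real.sin φ) * -(ρ * lam' ρ * Real.sin φ) + ρ * ρ = (ρ * q) ^ 2 from by
      linear_combination (ρ ^ 2 * (lam' ρ) ^ 2) * trig - ρ ^ 2 * hq2]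
    exact Real.sqrt_sq (by positivity)
  have hN : N = (-(lam' ρ * Real.cos φ) / q, -(lam' ρ * Real.sin φ) / q, 1 / q) := by
    simp only [N]
    rw [hnorm, hcross]
    simp only [smul3, Prod.mk.injEq]
    refine ⟨?_, ?_, ?_⟩ <;> field_simp <;> ring
  have hg11 : g11 = q ^ 2 := by
    simp only [g11, Xρ, dot3]
    linear_combination trig - hq2
  have hg12 : g12 = 0 := by
    simp only [g12, Xρ, Xφ, dot3]; ring
  have hg22 : g22 = ρ ^ 2 := by
    simp only [g22, Xφ, dot3]
    linear_combination ρ ^ 2 * trig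
  have hh11 : h11 = lam'' ρ / q := by
    simp only [h11, Xρρ, hN, dot3]; ring
  have hh12 : h12 = 0 := by
    simp only [h12, Xρφ, hN, dot3]; ring
  have hh22 : h22 = ρ * lam' ρ / q := by
    simp only [h22, Xφφ, hN, dot3]
    field_simp
    linear_combination (ρ * lam' ρ) * trig
  have hK : K = A ρ * (A ρ + 2 * ε * U ρ) := by
    simp only [K, hh11, hh12, hh22, hg11, hg12, hg22]
    rw [hL2q, hLq]
    rcases hδ with rfl | rfl <;> field_simp <;> ring
  have hH : Hm = δ * (A ρ + ε * U ρ) := by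
    simp only [Hm, hh11, hh12, hh22, hg11, hg12, hg22]
    rw [hL2q, hLq]
    field_simp
    ring
  rw [hH, hK, show (δ * (A ρ + ε * U ρ)) ^ 2 - A ρ * (A ρ + 2 * ε * U ρ) = (U ρ) ^ 2 from by
    linear_combination ((A ρ + ε * U ρ) ^ 2) * hδ2 + ((U ρ) ^ 2) * hε2]
  exact Real.sqrt_sq_eq_abs _
end
end
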